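/- arXiv:1611.00502 — 2 statements merged into one kernel-verified Lean document; each statement's English description precedes it below -/
import Mathlib

section
/- Let $X_1,\dots,X_l$ be mutually independent random variables with values in finite nonempty sets $D_1,\dots,D_l$, let $\Omega=\prod_{i=1}^l D_i$ carry the product probability measure, and let $E_1,\dots,E_m\subseteq\Omega$ be events. If $p\in[0,1]$ satisfies $\Pr[E_j]\le p$ for all $j$, $d\ge 1$ is an integer with $|\Gamma(E_j)|\le d$ for all $j$ (where $\Gamma$ is the VDL out-neighborhood), and $\left(1+\tfrac{1}{d}\right)^{d} p\,(d+1) < 1$, then there exists an assignment $\alpha\in\Omega$ under which none of the events $E_1,\dots,E_m$ occurs. -/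
/-! Variable framework: `l` mutually independent random variables taking values
in finite nonempty sets `D i`; assignments are elements of `Ω = ∀ i, D i`;
the product probability measure is given by weights `w i : D i → ℝ`
(nonnegative, summing to 1 on each coordinate); events are subsets of `Ω`. -/

/-- A set `S` of coordinates determines the event `E` if membership in `E`
only depends on the values of the coordinates in `S`. -/
def Determines {l : ℕ} {D : Fin l → Type*} (S : Set (Fin l))
    (E : Set (∀ i, D i)) : Prop :=
  ∀ α β : ∀ i, D i, (∀ i ∈ S, α i = β i) → (α ∈ E ↔ β ∈ E)

/-- The scope of an event: the minimal set of coordinates that determines it,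
i.e. the intersection of all determining sets of coordinates. -/
def scope {l : ℕ} {D : Fin l → Type*} (E : Set (∀ i, D i)) : Set (Fin l) :=
  ⋂₀ { S : Set (Fin l) | Determines S E }

/-- `Ej` is variable-dependent directed lopsidependent (VDL) on `Ei`:
there is an assignment `α` under which `Ei` occurs and `Ej` does not, and
an assignment `β` differing from `α` only in coordinates in `scope Ei`
under which `Ej` occurs. -/
def VDL {l : ℕ} {D : Fin l → Type*} (Ei Ej : Set (∀ i, D i)) : Prop :=
  ∃ α β : ∀ i, D i,
    α ∈ Ei ∧ α ∉ Ej ∧ (∀ i, i ∉ scope Ei → β i = α i) ∧ β ∈ Ej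

/-- The VDL out-neighborhood `Γ(E j)` of the event `E j` among the events
`E 1, …, E m`: the set of those events that are VDL on `E j`. -/
def Gamma {l m : ℕ} {D : Fin l → Type*} (E : Fin m → Set (∀ i, D i))
    (j : Fin m) : Set (Set (∀ i, D i)) :=
  {F | (∃ k, E k = F) ∧ VDL (E j) F}

/-- The probability of the event `E` under the product probability measure
determined by the coordinate-wise weights `w`. -/
noncomputable def Pr {l : ℕ} {D : Fin l → Type*} [∀ i, Fintype (D i)]
    (w : ∀ i, D i → ℝ) (E : Set (∀ i, D i)) : ℝ :=
  ∑ α : ∀ i, D i, Set.indicator E (fun a => ∏ i, w i (a i)) α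

section Helpers

open scoped Classical

variable {l : ℕ} {D : Fin l → Type*}

lemma exists_det_of_not_mem_scope (E : Set (∀ i, D i)) {i : Fin l}
    (hi : i ∉ scope E) : ∃ S, Determines S E ∧ i ∉ S := by
  rw [scope, Set.mem_sInter] at hi
  push_neg at hi
  obtain ⟨S, hS, hiS⟩ := hi
  exact ⟨S, hS, hiS⟩

lemma update_mem_iff (E : Set (∀ i, D i)) {i : Fin l} (hi : i ∉ scope E)
    (α : ∀ i, D i) (b : D i) : α ∈ E ↔ Function.update α i b ∈ E := by
  obtain ⟨S, hS, hiS⟩ := exists_det_of_not_mem_scope E hi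
  exact hS α _ fun j hj =>
    (Function.update_of_ne (by rintro rfl; exact hiS hj) b α).symm

lemma scope_determines (E : Set (∀ i, D i)) : Determines (scope E) E := by
  intro α β hagree
  have key : ∀ s : Finset (Fin l), ∀ α β : ∀ i, D i,
      (∀ i, α i ≠ β i → i ∈ s ∧ i ∉ scope E) → (α ∈ E ↔ β ∈ E) := by
    intro s
    induction s using Finset.induction with
    | empty =>
      intro α β hs
      have : α = β := funext fun i => by
        by_contra hne; exact absurd (hs i hne).1 (Finset.notMem_empty i)
      rw [this]
    | @insert a s ha IH =>
      intro α β hs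
      have h1 : α ∈ E ↔ Function.update α a (β a) ∈ E := by
        by_cases hab : α a = β a
        · rw [← hab, Function.update_eq_self]
        · exact update_mem_iff E (hs a hab).2 α (β a)
      rw [h1]
      apply IH
      intro i hne
      have hia : i ≠ a := by
        rintro rfl; rw [Function.update_self] at hne; exact hne rfl
      rw [Function.update_of_ne hia] at hne
      rcases Finset.mem_insert.1 (hs i hne).1 with hh | hh
      · exact absurd hh hia
      · exact ⟨hh, (hs i hne).2⟩
  apply key Finset.univ
  intro i hne
  exact ⟨Finset.mem_univ i, fun hi => hne (hagree i hi)⟩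

variable [∀ i, Fintype (D i)]

lemma Pr_nonneg (w : ∀ i, D i → ℝ) (hw0 : ∀ i x, 0 ≤ w i x)
    (E : Set (∀ i, D i)) : 0 ≤ Pr w E :=
  Finset.sum_nonneg fun α _ =>
    Set.indicator_nonneg (fun a _ => Finset.prod_nonneg fun i _ => hw0 i (a i)) α

lemma Pr_mono (w : ∀ i, D i → ℝ) (hw0 : ∀ i x, 0 ≤ w i x)
    {A B : Set (∀ i, D i)} (hAB : A ⊆ B) : Pr w A ≤ Pr w B :=
  Finset.sum_le_sum fun α _ =>
    Set.indicator_le_indicator_of_subset hAB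
      (fun a => Finset.prod_nonneg fun i _ => hw0 i (a i)) α

lemma Pr_split (w : ∀ i, D i → ℝ) (A B : Set (∀ i, D i)) :
    Pr w A = Pr w (A ∩ B) + Pr w (A ∩ Bᶜ) := by
  unfold Pr
  rw [← Finset.sum_add_distrib]
  apply Finset.sum_congr rfl
  intro α _
  by_cases h1 : α ∈ A <;> by_cases h2 : α ∈ B <;>
    simp [Set.indicator_apply, h1, h2]

lemma Pr_univ (w : ∀ i, D i → ℝ) (hw1 : ∀ i, ∑ x : D i, w i x = 1) :
    Pr w Set.univ = 1 := by
  unfold Pr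
  simp only [Set.indicator_univ]
  rw [← Fintype.prod_sum w]
  simp [hw1]

lemma Pr_pos_exists {w : ∀ i, D i → ℝ} {E : Set (∀ i, D i)}
    (hpos : 0 < Pr w E) : ∃ α, α ∈ E := by
  by_contra hcon
  push_neg at hcon
  have hz : Pr w E = 0 :=
    Finset.sum_eq_zero fun α _ => Set.indicator_of_notMem (hcon α) _
  rw [hz] at hpos
  exact lt_irrefl _ hpos

lemma Pr_lopsided (w : ∀ i, D i → ℝ) (hw0 : ∀ i x, 0 ≤ w i x)
    (hw1 : ∀ i, ∑ x : D i, w i x = 1) (Ej B : Set (∀ i, D i))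
    (hB : ∀ a e : ∀ i, D i, a ∈ Ej → a ∈ B →
      (∀ i, i ∉ scope Ej → e i = a i) → e ∈ B) :
    Pr w (Ej ∩ B) ≤ Pr w Ej * Pr w B := by
  classical
  set P : (∀ i, D i) → ℝ := fun α => ∏ i, w i (α i) with hP
  have hPnn : ∀ α, 0 ≤ P α := fun α => Finset.prod_nonneg fun i _ => hw0 i (α i)
  have hPr : ∀ A : Set (∀ i, D i),
      Pr w A = ∑ α ∈ Finset.univ.filter (· ∈ A), P α := by
    intro A
    unfold Pr
    rw [Finset.sum_filter]
    apply Finset.sum_congr rfl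
    intro α _
    simp [Set.indicator_apply, hP]
  set T : ((∀ i, D i) × (∀ i, D i)) → ((∀ i, D i) × (∀ i, D i)) :=
    fun q => (fun i => if i ∈ scope Ej then q.1 i else q.2 i,
              fun i => if i ∈ scope Ej then q.2 i else q.1 i) with hT
  have hTinj : Function.Injective T := by
    rintro ⟨a, b⟩ ⟨a', b'⟩ hq
    have h1 : ∀ i, (if i ∈ scope Ej then a i else b i)
        = (if i ∈ scope Ej then a' i else b' i) :=
      fun i => congrFun (congrArg Prod.fst hq) i
    have h2 : ∀ i, (if i ∈ scope Ej then b i else a i)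
        = (if i ∈ scope Ej then b' i else a' i) :=
      fun i => congrFun (congrArg Prod.snd hq) i
    simp only [Prod.mk.injEq]
    constructor <;> funext i <;> by_cases hsc : i ∈ scope Ej
    · have := h1 i; simpa [hsc] using this
    · have := h2 i; simpa [hsc] using this
    · have := h2 i; simpa [hsc] using this
    · have := h1 i; simpa [hsc] using this
  have hTw : ∀ q, P (T q).1 * P (T q).2 = P q.1 * P q.2 := by
    intro q
    simp only [hT, hP]
    rw [← Finset.prod_mul_distrib, ← Finset.prod_mul_distrib]
    apply Finset.prod_congr rfl
    intro i _
    by_cases hsc : i ∈ scope Ej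
    · simp [hsc]
    · simp [hsc, mul_comm]
  set s : Finset ((∀ i, D i) × (∀ i, D i)) :=
    (Finset.univ.filter (· ∈ Ej ∩ B)) ×ˢ Finset.univ with hs
  set t : Finset ((∀ i, D i) × (∀ i, D i)) :=
    (Finset.univ.filter (· ∈ Ej)) ×ˢ (Finset.univ.filter (· ∈ B)) with ht
  have himg : s.image T ⊆ t := by
    intro q hq
    obtain ⟨⟨a, b⟩, hab, rfl⟩ := Finset.mem_image.1 hq
    rw [hs] at hab
    rw [Finset.mem_product] at hab
    have haEB : a ∈ Ej ∩ B := (Finset.mem_filter.1 hab.1).2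
    rw [ht, Finset.mem_product]
    constructor
    · simp only [Finset.mem_filter, Finset.mem_univ, true_and]
      have : a ∈ Ej ↔ (T (a, b)).1 ∈ Ej := by
        apply scope_determines Ej
        intro i hi
        simp [hT, hi]
      exact this.1 haEB.1
    · simp only [Finset.mem_filter, Finset.mem_univ, true_and]
      apply hB a _ haEB.1 haEB.2
      intro i hi
      simp [hT, hi]
  calc Pr w (Ej ∩ B) = Pr w (Ej ∩ B) * 1 := (mul_one _).symm
    _ = Pr w (Ej ∩ B) * Pr w Set.univ := by rw [Pr_univ w hw1]
    _ = ∑ q ∈ s, P q.1 * P q.2 := by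
        rw [hPr, hPr, Finset.sum_mul_sum, hs, Finset.sum_product]
        simp
    _ = ∑ q ∈ s, P (T q).1 * P (T q).2 := by
        apply Finset.sum_congr rfl; intro q _; exact (hTw q).symm
    _ = ∑ q ∈ s.image T, P q.1 * P q.2 := by
        rw [Finset.sum_image fun x _ y _ hxy => hTinj hxy]
    _ ≤ ∑ q ∈ t, P q.1 * P q.2 := by
        apply Finset.sum_le_sum_of_subset_of_nonneg himg
        intro q _ _
        exact mul_nonneg (hPnn _) (hPnn _)
    _ = Pr w Ej * Pr w B := by
        rw [hPr, hPr, Finset.sum_mul_sum, ht, Finset.sum_product]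

end Helpers

/-- Theorem 2 (sharper symmetric lopsided LLL for VDL): if every event has
probability at most `p`, every VDL out-neighborhood has size at most `d ≥ 1`,
and `(1 + 1/d)^d · p · (d+1) < 1`, then some assignment avoids all events. -/
theorem symmetric_lopsided_LLL_VDL_sharp
    {l m : ℕ} {D : Fin l → Type*} [∀ i, Fintype (D i)] [∀ i, Nonempty (D i)]
    (w : ∀ i, D i → ℝ) (hw0 : ∀ i x, 0 ≤ w i x)
    (hw1 : ∀ i, ∑ x : D i, w i x = 1)
    (E : Fin m → Set (∀ i, D i))
    (p : ℝ) (hp : p ∈ Set.Icc (0 : ℝ) 1)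
    (hpE : ∀ j, Pr w (E j) ≤ p)
    (d : ℕ) (hd1 : 1 ≤ d) (hd : ∀ j, (Gamma E j).ncard ≤ d)
    (h : (1 + 1 / (d : ℝ)) ^ d * p * (d + 1) < 1) :
    ∃ α : ∀ i, D i, ∀ j, α ∉ E j := by
  classical
  set x : ℝ := 1 / (d + 1 : ℝ) with hxdef
  have hd0 : (1 : ℝ) ≤ d := by exact_mod_cast hd1
  have hdpos : (0 : ℝ) < d := by linarith
  have hd1pos : (0 : ℝ) < (d : ℝ) + 1 := by linarith
  have hx0 : 0 < x := by rw [hxdef]; positivity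
  have hx1 : x < 1 := by
    rw [hxdef, div_lt_one hd1pos]; linarith
  have h1x0 : 0 < 1 - x := by linarith
  have h1x1 : 1 - x ≤ 1 := by linarith
  have key1 : (1 + 1 / (d : ℝ)) ^ d * (1 - x) ^ d = 1 := by
    rw [← mul_pow]
    have hone : (1 + 1 / (d : ℝ)) * (1 - x) = 1 := by
      rw [hxdef]; field_simp; ring
    rw [hone, one_pow]
  have key2 : ((d : ℝ) + 1) * x = 1 := by
    rw [hxdef]; field_simp
  have hpx : p < x * (1 - x) ^ d := by
    have hpos : 0 < x * (1 - x) ^ d := by positivity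
    have h2 := mul_lt_mul_of_pos_right h hpos
    rw [one_mul] at h2
    calc p = (1 + 1 / (d : ℝ)) ^ d * p * ((d : ℝ) + 1) * (x * (1 - x) ^ d) := by
          have hre : (1 + 1 / (d : ℝ)) ^ d * p * ((d : ℝ) + 1) * (x * (1 - x) ^ d)
              = p * ((1 + 1 / (d : ℝ)) ^ d * (1 - x) ^ d) * (((d : ℝ) + 1) * x) := by
            ring
          rw [hre, key1, key2]; ring
      _ < x * (1 - x) ^ d := h2
  set A : Finset (Fin m) → Set (∀ i, D i) := fun S => ⋂ k ∈ S, (E k)ᶜ with hA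
  have hAempty : A ∅ = Set.univ := by simp [hA]
  have hAinsert : ∀ (a : Fin m) (S : Finset (Fin m)),
      A (insert a S) = (E a)ᶜ ∩ A S := by
    intro a S
    simp [hA, Finset.set_biInter_insert]
  have hAmem : ∀ (S : Finset (Fin m)) (k : Fin m), k ∈ S → A S ⊆ (E k)ᶜ := by
    intro S k hk α hα
    simp only [hA, Set.mem_iInter] at hα
    exact hα k hk
  have hAintro : ∀ (S : Finset (Fin m)) (α : ∀ i, D i),
      (∀ k ∈ S, α ∉ E k) → α ∈ A S := by
    intro S α hα
    simp only [hA, Set.mem_iInter]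
    exact hα
  have hAmono : ∀ {S S' : Finset (Fin m)}, S ⊆ S' → A S' ⊆ A S := by
    intro S S' hss α hα
    exact hAintro S α fun k hk => hAmem S' k (hss hk) hα
  have prn : ∀ B : Set (∀ i, D i), 0 ≤ Pr w B := fun B => Pr_nonneg w hw0 B
  have main : ∀ n (S : Finset (Fin m)), S.card ≤ n → ∀ j,
      Pr w (E j ∩ A S) ≤ x * Pr w (A S) := by
    intro n
    induction n with
    | zero =>
      intro S hS j
      have hSe : S = ∅ := Finset.card_eq_zero.mp (Nat.le_antisymm hS (Nat.zero_le _))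
      subst hSe
      rw [hAempty, Set.inter_univ, Pr_univ w hw1, mul_one]
      have hple : (1 - x) ^ d ≤ 1 := pow_le_one₀ h1x0.le h1x1
      calc Pr w (E j) ≤ p := hpE j
        _ ≤ x * (1 - x) ^ d := hpx.le
        _ ≤ x * 1 := mul_le_mul_of_nonneg_left hple hx0.le
        _ = x := mul_one x
    | succ n IH =>
      intro S hS j
      set S1 : Finset (Fin m) := S.filter (fun k => VDL (E j) (E k)) with hS1
      set S2 : Finset (Fin m) := S.filter (fun k => ¬ VDL (E j) (E k)) with hS2
      have hS12 : S1 ∪ S2 = S := Finset.filter_union_filter_not_eq _ S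
      have hlop : Pr w (E j ∩ A S2) ≤ Pr w (E j) * Pr w (A S2) := by
        apply Pr_lopsided w hw0 hw1
        intro a e haE haB hagree
        apply hAintro
        intro k hk he
        have hnv : ¬ VDL (E j) (E k) := (Finset.mem_filter.1 hk).2
        exact hnv ⟨a, e, haE, hAmem S2 k hk haB, hagree, he⟩
      have peel : ∀ S1' : Finset (Fin m), S1' ⊆ S1 →
          (1 - x) ^ ((S1'.image E).card) * Pr w (A S2) ≤ Pr w (A (S1' ∪ S2)) := by
        intro S1'
        induction S1' using Finset.induction with
        | empty => intro _; simp
        | @insert a s hanotin IHp =>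
          intro hsub
          have hsub' : s ⊆ S1 := fun k hk => hsub (Finset.mem_insert_of_mem hk)
          have haS1 : a ∈ S1 := hsub (Finset.mem_insert_self a s)
          by_cases hdup : E a ∈ s.image E
          · have himg : (insert a s).image E = s.image E := by
              rw [Finset.image_insert, Finset.insert_eq_self.mpr hdup]
            have hAeq : A (insert a s ∪ S2) = A (s ∪ S2) := by
              obtain ⟨b, hb, hba⟩ := Finset.mem_image.1 hdup
              apply subset_antisymm
              · exact hAmono (Finset.union_subset_union
                  (Finset.subset_insert a s) (Finset.Subset.refl S2))
              · intro α hα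
                rw [Finset.insert_union, hAinsert]
                refine ⟨?_, hα⟩
                rw [← hba]
                exact hAmem (s ∪ S2) b (Finset.mem_union_left _ hb) hα
            rw [hAeq, himg]
            exact IHp hsub'
          · have himg : ((insert a s).image E).card = (s.image E).card + 1 := by
              rw [Finset.image_insert, Finset.card_insert_of_notMem hdup]
            have hcard : (s ∪ S2).card ≤ n := by
              have hsubS : s ∪ S2 ⊆ S.erase a := by
                intro k hk
                rcases Finset.mem_union.1 hk with hk' | hk'
                · exact Finset.mem_erase.2
                    ⟨fun he => hanotin (he ▸ hk'), Finset.filter_subset _ _ (hsub' hk')⟩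
                · refine Finset.mem_erase.2 ⟨?_, Finset.filter_subset _ _ hk'⟩
                  rintro rfl
                  exact (Finset.mem_filter.1 hk').2 (Finset.mem_filter.1 haS1).2
              calc (s ∪ S2).card ≤ (S.erase a).card := Finset.card_le_card hsubS
                _ = S.card - 1 := Finset.card_erase_of_mem (Finset.filter_subset _ _ haS1)
                _ ≤ n := by omega
            have hmain : Pr w (A (s ∪ S2) ∩ E a) ≤ x * Pr w (A (s ∪ S2)) := by
              rw [Set.inter_comm]
              exact IH (s ∪ S2) hcard a
            have hsplit := Pr_split w (A (s ∪ S2)) (E a)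
            have hAins : A (insert a s ∪ S2) = A (s ∪ S2) ∩ (E a)ᶜ := by
              rw [Finset.insert_union, hAinsert, Set.inter_comm]
            have hIHp := IHp hsub'
            rw [himg, hAins]
            have hdiff : Pr w (A (s ∪ S2) ∩ (E a)ᶜ)
                = Pr w (A (s ∪ S2)) - Pr w (A (s ∪ S2) ∩ E a) := by linarith
            rw [hdiff]
            calc (1 - x) ^ ((s.image E).card + 1) * Pr w (A S2)
                = (1 - x) * ((1 - x) ^ (s.image E).card * Pr w (A S2)) := by ring
              _ ≤ (1 - x) * Pr w (A (s ∪ S2)) :=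
                  mul_le_mul_of_nonneg_left hIHp h1x0.le
              _ ≤ Pr w (A (s ∪ S2)) - Pr w (A (s ∪ S2) ∩ E a) := by nlinarith
      have ht : (S1.image E).card ≤ d := by
        have hsub : ((S1.image E : Finset _) : Set (Set (∀ i, D i))) ⊆ Gamma E j := by
          intro F hF
          obtain ⟨k, hk, rfl⟩ := Finset.mem_image.1 hF
          exact ⟨⟨k, rfl⟩, (Finset.mem_filter.1 hk).2⟩
        have hfin : (Gamma E j).Finite :=
          (Set.finite_range E).subset fun F hF => hF.1.imp fun k hk => hk
        calc (S1.image E).card = ((S1.image E : Finset _) : Set _).ncard :=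
              (Set.ncard_coe_finset _).symm
          _ ≤ (Gamma E j).ncard := Set.ncard_le_ncard hsub hfin
          _ ≤ d := hd j
      have hpeel := peel S1 (Finset.Subset.refl S1)
      have hmono : Pr w (E j ∩ A S) ≤ Pr w (E j ∩ A S2) := by
        apply Pr_mono w hw0
        apply Set.inter_subset_inter_right
        rw [← hS12]
        exact hAmono Finset.subset_union_right
      calc Pr w (E j ∩ A S) ≤ Pr w (E j ∩ A S2) := hmono
        _ ≤ Pr w (E j) * Pr w (A S2) := hlop
        _ ≤ p * Pr w (A S2) := mul_le_mul_of_nonneg_right (hpE j) (prn _)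
        _ ≤ (x * (1 - x) ^ d) * Pr w (A S2) :=
            mul_le_mul_of_nonneg_right hpx.le (prn _)
        _ ≤ (x * (1 - x) ^ ((S1.image E).card)) * Pr w (A S2) := by
            apply mul_le_mul_of_nonneg_right _ (prn _)
            apply mul_le_mul_of_nonneg_left _ hx0.le
            exact pow_le_pow_of_le_one h1x0.le h1x1 ht
        _ = x * ((1 - x) ^ ((S1.image E).card) * Pr w (A S2)) := by ring
        _ ≤ x * Pr w (A (S1 ∪ S2)) := mul_le_mul_of_nonneg_left hpeel hx0.le
        _ = x * Pr w (A S) := by rw [hS12]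
  have pos : ∀ S : Finset (Fin m), 0 < Pr w (A S) := by
    intro S
    induction S using Finset.induction with
    | empty => rw [hAempty, Pr_univ w hw1]; norm_num
    | @insert a s ha IHs =>
      rw [hAinsert]
      have hsplit := Pr_split w (A s) (E a)
      have hmain : Pr w (A s ∩ E a) ≤ x * Pr w (A s) := by
        rw [Set.inter_comm]
        exact main s.card s le_rfl a
      have heq : Pr w ((E a)ᶜ ∩ A s) = Pr w (A s) - Pr w (A s ∩ E a) := by
        rw [Set.inter_comm]; linarith
      rw [heq]
      nlinarith
  obtain ⟨α, hα⟩ := Pr_pos_exists (pos Finset.univ)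
  refine ⟨α, fun j => ?_⟩
  exact hAmem Finset.univ j (Finset.mem_univ j) hα
end

section
/- Let $X_1,\dots,X_l$ be mutually independent random variables with values in finite nonempty sets $D_1,\dots,D_l$, let $\Omega=\prod_{i=1}^l D_i$ carry the product probability measure, and let $E_1,\dots,E_m\subseteq\Omega$ be events. Fix $j\in\{1,\dots,m\}$ and let $I\subseteq\{1,\dots,m\}\setminus\{j\}$ be a set of indices such that $E_i\notin\Gamma(E_j)$ for every $i\in I$ (where $\Gamma$ is the VDL out-neighborhood). If $\Pr\big[\bigcap_{i\in I}\overline{E_i}\big]>0$, then $\Pr\big[E_j \mid \bigcap_{i\in I}\overline{E_i}\big] \le \Pr[E_j]$. -/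
theorem aux_det {l : ℕ} {D : Fin l → Type*} (E : Set (∀ i, D i)) :
    ∀ T : Finset (Fin l), ∀ α β : ∀ i, D i,
      (∀ i ∈ T, i ∉ scope E) → (∀ i, i ∉ T → α i = β i) → (α ∈ E ↔ β ∈ E) := by
  classical
  intro T
  induction T using Finset.induction_on with
  | empty =>
    intro α β _ h
    have : α = β := funext fun i => h i (by simp)
    rw [this]
  | insert a s hi ih =>
    intro α β hT h
    set γ := Function.update α a (β a) with hγ
    have h1 : α ∈ E ↔ γ ∈ E := by
      have ha : a ∉ scope E := hT a (Finset.mem_insert_self a s)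
      rw [scope, Set.mem_sInter] at ha
      push_neg at ha
      obtain ⟨S, hSdet, haS⟩ := ha
      refine hSdet α γ (fun i hiS => ?_)
      by_cases h' : i = a
      · exact absurd (h' ▸ hiS) haS
      · rw [hγ, Function.update_of_ne h']
    have h2 : γ ∈ E ↔ β ∈ E := by
      refine ih γ β (fun i hi' => hT i (Finset.mem_insert_of_mem hi')) ?_
      intro i hi'
      by_cases h' : i = a
      · subst h'; rw [hγ, Function.update_self]
      · rw [hγ, Function.update_of_ne h']
        exact h i (by simp [hi', h'])
    exact h1.trans h2

theorem determines_scope {l : ℕ} {D : Fin l → Type*} (E : Set (∀ i, D i)) :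
    Determines (scope E) E := by
  classical
  intro α β hab
  refine aux_det E (Finset.univ.filter fun i => i ∉ scope E) α β ?_ ?_
  · intro i hi; simpa using hi
  · intro i hi
    have : i ∈ scope E := by simpa using hi
    exact hab i this

/-- Lemma 1: if no event indexed by `I` is in the VDL out-neighborhood of
`E j` (and `j ∉ I`), then conditioning on all events of `I` failing does not
increase the probability of `E j`. -/
theorem cond_prob_le_of_not_VDL
    {l m : ℕ} {D : Fin l → Type*} [∀ i, Fintype (D i)] [∀ i, Nonempty (D i)]
    (w : ∀ i, D i → ℝ) (hw0 : ∀ i x, 0 ≤ w i x)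
    (hw1 : ∀ i, ∑ x : D i, w i x = 1)
    (E : Fin m → Set (∀ i, D i))
    (j : Fin m) (I : Set (Fin m)) (hjI : j ∉ I)
    (hI : ∀ i ∈ I, E i ∉ Gamma E j)
    (hpos : 0 < Pr w (⋂ i ∈ I, (E i)ᶜ)) :
    Pr w (E j ∩ ⋂ i ∈ I, (E i)ᶜ) / Pr w (⋂ i ∈ I, (E i)ᶜ) ≤ Pr w (E j) := by
  classical
  set S := scope (E j) with hSdef
  set N : Set (∀ i, D i) := ⋂ i ∈ I, (E i)ᶜ with hNdef
  set p : (∀ i, D i) → ℝ := fun α => ∏ i, w i (α i) with hp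
  have hp0 : ∀ α, 0 ≤ p α := fun α => Finset.prod_nonneg fun i _ => hw0 i (α i)
  have hdet : Determines S (E j) := determines_scope (E j)
  have hnv : ∀ i ∈ I, ¬ VDL (E j) (E i) := fun i hi hv => hI i hi ⟨⟨i, rfl⟩, hv⟩
  set mix : (∀ i, D i) → (∀ i, D i) → (∀ i, D i) :=
    fun α β i => if i ∈ S then α i else β i with hmix
  have hmixmix : ∀ α β, mix (mix α β) (mix β α) = α := by
    intro α β; funext i; by_cases h : i ∈ S <;> simp [hmix, h]
  have hpmul : ∀ α β, p (mix α β) * p (mix β α) = p α * p β := by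
    intro α β
    rw [hp]
    simp only
    rw [← Finset.prod_mul_distrib, ← Finset.prod_mul_distrib]
    refine Finset.prod_congr rfl fun i _ => ?_
    by_cases h : i ∈ S <;> simp [hmix, h, mul_comm]
  have hmem1 : ∀ α β, α ∈ E j → mix α β ∈ E j := by
    intro α β hα
    exact (hdet α (mix α β) (fun i hi => by simp [hmix, hi])).1 hα
  have hmem2 : ∀ α β, α ∈ E j → α ∈ N → mix β α ∈ N := by
    intro α β hαj hαN
    rw [hNdef, Set.mem_iInter₂] at hαN ⊢
    intro i hi hcon
    exact hnv i hi ⟨α, mix β α, hαj, hαN i hi,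
      fun k hk => by simp [hmix, hSdef, hk], hcon⟩
  have hPr : ∀ X : Set (∀ i, D i), Pr w X = ∑ α, (if α ∈ X then p α else 0) := by
    intro X
    refine Finset.sum_congr rfl fun α _ => ?_
    rw [Set.indicator_apply]
  have htot : ∑ β : (∀ i, D i), p β = 1 := by
    have := Finset.prod_univ_sum (fun i => (Finset.univ : Finset (D i))) (fun i x => w i x)
    rw [Fintype.piFinset_univ] at this
    rw [hp]; rw [← this]; simp [hw1]
  -- the involution on pairs
  set T : (∀ i, D i) × (∀ i, D i) → (∀ i, D i) × (∀ i, D i) :=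
    fun x => (mix x.1 x.2, mix x.2 x.1) with hT
  have hTinv : Function.Involutive T := by
    intro x
    exact Prod.ext (hmixmix x.1 x.2) (hmixmix x.2 x.1)
  set G : (∀ i, D i) × (∀ i, D i) → ℝ :=
    fun x => (if x.1 ∈ E j then p x.1 else 0) * (if x.2 ∈ N then p x.2 else 0) with hG
  have hdouble : ∀ f g : (∀ i, D i) → ℝ,
      (∑ a, f a) * (∑ b, g b)
        = ∑ x : (∀ i, D i) × (∀ i, D i), f x.1 * g x.2 := by
    intro f g
    rw [Finset.sum_mul_sum, Fintype.sum_prod_type]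
  have hGsum : ∑ x : (∀ i, D i) × (∀ i, D i), G x = Pr w (E j) * Pr w N := by
    rw [hPr (E j), hPr N,
      hdouble (fun a => if a ∈ E j then p a else 0) (fun b => if b ∈ N then p b else 0)]
  have hstep : ∀ x : (∀ i, D i) × (∀ i, D i),
      (if x.1 ∈ E j ∩ N then p x.1 else 0) * p x.2 ≤ G (T x) := by
    intro x
    by_cases hx : x.1 ∈ E j ∩ N
    · rw [if_pos hx, hG, hT]
      simp only
      rw [if_pos (hmem1 x.1 x.2 hx.1), if_pos (hmem2 x.1 x.2 hx.1 hx.2), hpmul]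
    · rw [if_neg hx, hG, hT]
      simp only
      rw [zero_mul]
      refine mul_nonneg ?_ ?_ <;> split_ifs <;> simp [hp0]
  have key : Pr w (E j ∩ N) ≤ Pr w (E j) * Pr w N := by
    calc Pr w (E j ∩ N)
        = ∑ x : (∀ i, D i) × (∀ i, D i),
            (if x.1 ∈ E j ∩ N then p x.1 else 0) * p x.2 := by
          rw [← hdouble (fun a => if a ∈ E j ∩ N then p a else 0) p, htot, mul_one,
            hPr (E j ∩ N)]
          exact Finset.sum_congr rfl fun a _ => by split_ifs <;> rfl
      _ ≤ ∑ x : (∀ i, D i) × (∀ i, D i), G (T x) := Finset.sum_le_sum fun x _ => hstep x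
      _ = ∑ x : (∀ i, D i) × (∀ i, D i), G x := by
          exact Equiv.sum_comp (Function.Involutive.toPerm T hTinv) G
      _ = Pr w (E j) * Pr w N := hGsum
  rw [div_le_iff₀ hpos]
  exact key
end
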